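/- Both families DNREG(√n) and DNREG(log n) contain non-regular languages: there exist context-free grammars G₁ and G₂ generating non-regular languages with dnreg_{G₁}(n) ∈ O(√n) and dnreg_{G₂}(n) ∈ O(log n). -/

import Mathlib

/-- A context-free rule is *regular* (right-linear) if it has the form `A → w` or `A → wB`
for a terminal word `w` and a nonterminal `B`. -/
def IsRegularRule {T N : Type} (r : ContextFreeRule T N) : Prop :=
  (∃ w : List T, r.output = w.map Symbol.terminal) ∨
  (∃ w : List T, ∃ B : N, r.output = w.map Symbol.terminal ++ [Symbol.nonterminal B])

/-- `DerivesN g u v k` : the grammar `g` derives `v` from `u` by a derivation using exactly `k`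
applications of non-regular rules. -/
inductive DerivesN (g : ContextFreeGrammar T) :
    List (Symbol T g.NT) → List (Symbol T g.NT) → ℕ → Prop
  | refl (u : List (Symbol T g.NT)) : DerivesN g u u 0
  | regStep {u v w : List (Symbol T g.NT)} {k : ℕ} (r : ContextFreeRule T g.NT)
      (hr : r ∈ g.rules) (hreg : IsRegularRule r) (huv : r.Rewrites u v)
      (hvw : DerivesN g v w k) : DerivesN g u w k
  | nonregStep {u v w : List (Symbol T g.NT)} {k : ℕ} (r : ContextFreeRule T g.NT)
      (hr : r ∈ g.rules) (hreg : ¬ IsRegularRule r) (huv : r.Rewrites u v)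
      (hvw : DerivesN g v w k) : DerivesN g u w (k + 1)

/-- The degree of non-regularity of a terminal word: the minimal number of applications of
non-regular rules over all derivations of the word (`0` if there is no derivation, since in `ℕ`
the infimum of the empty set is `0`). -/
noncomputable def dnregWord (g : ContextFreeGrammar T) (w : List T) : ℕ :=
  sInf {k | DerivesN g [Symbol.nonterminal g.initial] (w.map Symbol.terminal) k}

/-- The degree of non-regularity of the grammar: the maximum of `dnregWord` over words of
length `n`. -/
noncomputable def dnregFun (g : ContextFreeGrammar T) (n : ℕ) : ℕ :=
  sSup {m | ∃ w : List T, w.length = n ∧ dnregWord g w = m}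

/-- `f ∈ O(h)` for `ℕ`-valued functions. -/
def InO (f h : ℕ → ℕ) : Prop := ∃ c : ℕ, ∀ n, f n ≤ c * h n + c

/-- `f ∈ Ω(n)`: there is a rational constant `1/c > 0` with `f n ≥ n/c` for infinitely many `n`. -/
def InOmegaLinear (f : ℕ → ℕ) : Prop := ∃ c : ℕ, 0 < c ∧ ∀ m : ℕ, ∃ n ≥ m, n ≤ c * f n

/-- The class `DNREG(h)` of languages generated by some context-free grammar whose degree of
non-regularity is in `O(h)`. -/
def DNREG (T : Type) (h : ℕ → ℕ) : Set (Language T) :=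
  {L | ∃ g : ContextFreeGrammar T, g.language = L ∧ InO (dnregFun g) h}

/-!
A word `w` over `{0, 1, #}` is a counter word if the `#`-separated blocks of `#w` are
`0, 0, 1, 1, 2, 2, …` in binary, alternately little- and big-endian (zero being the empty block):
each block is the reverse of the previous one, plus one at every other separator. The grammar
generates the other words. It checks a single pair `X # Y` by rules nested around the separator,
one non-right-linear step per digit of `X`, and reads everything else right-linearly. A word that
is not a counter word is derived through its first bad pair; the blocks before it are counter
values, so `X` has `O(log n)` digits. Counter words ending in different values are distinguished
by the next block, so the language is not regular.
-/

/-! ### Derivations counting non-right-linear steps -/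

namespace DerivesN

variable {T : Type} {g : ContextFreeGrammar T}

theorem trans {u v w : List (Symbol T g.NT)} {k l : ℕ}
    (h₁ : DerivesN g u v k) (h₂ : DerivesN g v w l) : DerivesN g u w (k + l) := by
  induction h₁ with
  | refl => simpa using h₂
  | regStep r hr hreg huv _ ih => exact .regStep r hr hreg huv (ih h₂)
  | nonregStep r hr hreg huv _ ih =>
    rw [Nat.add_right_comm]
    exact .nonregStep r hr hreg huv (ih h₂)

theorem append_left {u v : List (Symbol T g.NT)} {k : ℕ} (h : DerivesN g u v k)
    (p : List (Symbol T g.NT)) : DerivesN g (p ++ u) (p ++ v) k := by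
  induction h with
  | refl => exact .refl _
  | regStep r hr hreg huv _ ih => exact .regStep r hr hreg (huv.append_left p) ih
  | nonregStep r hr hreg huv _ ih => exact .nonregStep r hr hreg (huv.append_left p) ih

theorem append_right {u v : List (Symbol T g.NT)} {k : ℕ} (h : DerivesN g u v k)
    (p : List (Symbol T g.NT)) : DerivesN g (u ++ p) (v ++ p) k := by
  induction h with
  | refl => exact .refl _
  | regStep r hr hreg huv _ ih => exact .regStep r hr hreg (huv.append_right p) ih
  | nonregStep r hr hreg huv _ ih => exact .nonregStep r hr hreg (huv.append_right p) ih

theorem append {u v u' v' : List (Symbol T g.NT)} {k l : ℕ} (h : DerivesN g u v k)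
    (h' : DerivesN g u' v' l) : DerivesN g (u ++ u') (v ++ v') (k + l) :=
  (h.append_right u').trans (h'.append_left v)

theorem derives {u v : List (Symbol T g.NT)} {k : ℕ} (h : DerivesN g u v k) : g.Derives u v := by
  induction h with
  | refl => exact .refl _
  | regStep r hr _ huv _ ih | nonregStep r hr _ huv _ ih =>
    exact ContextFreeGrammar.Produces.trans_derives ⟨r, hr, huv⟩ ih

theorem head_regular {r : ContextFreeRule T g.NT} (hr : r ∈ g.rules) (hreg : IsRegularRule r)
    {w : List (Symbol T g.NT)} {k : ℕ} (h : DerivesN g r.output w k) :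
    DerivesN g [.nonterminal r.input] w k :=
  .regStep r hr hreg ContextFreeRule.Rewrites.input_output h

theorem head_nonregular {r : ContextFreeRule T g.NT} (hr : r ∈ g.rules)
    (hreg : ¬IsRegularRule r) {w : List (Symbol T g.NT)} {k : ℕ}
    (h : DerivesN g r.output w k) : DerivesN g [.nonterminal r.input] w (k + 1) :=
  .nonregStep r hr hreg ContextFreeRule.Rewrites.input_output h

end DerivesN

theorem not_isRegularRule_of_mem_dropLast {T N : Type} {r : ContextFreeRule T N} {A : N}
    (h : .nonterminal A ∈ r.output.dropLast) : ¬IsRegularRule r := by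
  rintro (⟨w, hw⟩ | ⟨w, B, hw⟩) <;> rw [hw] at h
  · simpa using List.mem_of_mem_dropLast h
  · simp at h

theorem dnregWord_le_of_derivesN {T : Type} {g : ContextFreeGrammar T} {w : List T} {B : ℕ}
    (h : w ∈ g.language →
      ∃ k ≤ B, DerivesN g [.nonterminal g.initial] (w.map .terminal) k) :
    dnregWord g w ≤ B := by
  rcases Set.eq_empty_or_nonempty
      {k | DerivesN g [.nonterminal g.initial] (w.map .terminal) k} with hempty | ⟨k₀, hk₀⟩
  · simp [dnregWord, hempty]
  · obtain ⟨k, hkB, hk⟩ := h hk₀.derives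
    exact (Nat.sInf_le hk).trans hkB

theorem dnregFun_le_of_forall {T : Type} {g : ContextFreeGrammar T} {n B : ℕ}
    (h : ∀ w : List T, w.length = n → dnregWord g w ≤ B) : dnregFun g n ≤ B :=
  csSup_le' fun _ ⟨w, hw, hm⟩ => hm ▸ h w hw

/-! ### Invariant languages of a grammar -/

section FormLanguage

variable {T N : Type}

def formLanguage (L : N → Language T) (α : List (Symbol T N)) : Language T :=
  (α.map fun
    | .terminal a => {[a]}
    | .nonterminal A => L A).prod

variable {L : N → Language T}

@[simp] theorem mem_formLanguage_nil {w : List T} : w ∈ formLanguage L [] ↔ w = [] :=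
  Language.mem_one w

@[simp] theorem mem_formLanguage_terminal_cons {a : T} {α : List (Symbol T N)} {w : List T} :
    w ∈ formLanguage L (.terminal a :: α) ↔ ∃ w' ∈ formLanguage L α, w = a :: w' := by
  simp only [formLanguage, List.map_cons, List.prod_cons, Language.mem_mul]
  constructor
  · rintro ⟨_, rfl, w', hw', rfl⟩
    exact ⟨w', hw', rfl⟩
  · rintro ⟨w', hw', rfl⟩
    exact ⟨[a], rfl, w', hw', rfl⟩

@[simp] theorem mem_formLanguage_nonterminal_cons {A : N} {α : List (Symbol T N)} {w : List T} :
    w ∈ formLanguage L (.nonterminal A :: α) ↔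
      ∃ x ∈ L A, ∃ y ∈ formLanguage L α, w = x ++ y := by
  simp only [formLanguage, List.map_cons, List.prod_cons, Language.mem_mul, eq_comm]

theorem formLanguage_append (α β : List (Symbol T N)) :
    formLanguage L (α ++ β) = formLanguage L α * formLanguage L β := by
  simp [formLanguage]

theorem mem_formLanguage_map_terminal (w : List T) : w ∈ formLanguage L (w.map .terminal) := by
  induction w with
  | nil => rfl
  | cons a w ih => exact mem_formLanguage_terminal_cons.mpr ⟨w, ih, rfl⟩

theorem mem_of_derives {g : ContextFreeGrammar T} {L : g.NT → Language T}
    (hL : ∀ r ∈ g.rules, formLanguage L r.output ≤ L r.input) {A : g.NT} {w : List T}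
    (h : g.Derives [.nonterminal A] (w.map .terminal)) : w ∈ L A := by
  suffices ∀ {u v}, g.Derives u v → formLanguage L v ≤ formLanguage L u by
    have hw : w ∈ formLanguage L [.nonterminal A] := this h (mem_formLanguage_map_terminal w)
    rw [mem_formLanguage_nonterminal_cons] at hw
    obtain ⟨x, hx, _, rfl, rfl⟩ := hw
    simpa using hx
  intro u v huv
  induction huv with
  | refl => exact le_rfl
  | tail _ hstep ih =>
    obtain ⟨r, hr, hrw⟩ := hstep
    obtain ⟨p, q, rfl, rfl⟩ := hrw.exists_parts
    refine le_trans ?_ ih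
    simp only [formLanguage_append]
    gcongr
    simpa [formLanguage] using hL r hr

end FormLanguage

/-! ### Growth rates and regularity -/

theorem InO.trans {f g h : ℕ → ℕ} (hfg : InO f g) (hgh : InO g h) : InO f h := by
  obtain ⟨c, hc⟩ := hfg
  obtain ⟨d, hd⟩ := hgh
  refine ⟨c * d + c, fun n => ?_⟩
  calc f n ≤ c * g n + c := hc n
    _ ≤ c * (d * h n + d) + c := by gcongr; exact hd n
    _ ≤ (c * d + c) * h n + (c * d + c) := by nlinarith

theorem log_two_le_two_mul_sqrt_add_one (n : ℕ) : Nat.log 2 n ≤ 2 * Nat.sqrt n + 1 := by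
  rcases Nat.eq_zero_or_pos n with rfl | hn
  · simp
  set k := Nat.log 2 n
  have hpow : 2 ^ (k / 2) ≤ Nat.sqrt n := by
    rw [Nat.le_sqrt, ← pow_add]
    exact (Nat.pow_le_pow_right two_pos (by omega)).trans (Nat.pow_log_le_self 2 hn.ne')
  have : k / 2 < 2 ^ (k / 2) := Nat.lt_two_pow_self
  omega

theorem inO_log_sqrt : InO (fun n => Nat.log 2 n) Nat.sqrt :=
  ⟨2, fun n => (log_two_le_two_mul_sqrt_add_one n).trans (by omega)⟩

theorem not_isRegular_of_forall_append_mem_iff {α : Type*} {L : Language α}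
    (x z : ℕ → List α) (h : ∀ i j, x i ++ z j ∈ L ↔ i ≠ j) : ¬L.IsRegular := by
  intro hreg
  refine Set.infinite_range_of_injective (f := fun i => L.leftQuotient (x i)) (fun i j hij => ?_)
    (hreg.finite_range_leftQuotient.subset (Set.range_comp_subset_range x L.leftQuotient))
  have : x i ++ z j ∈ L ↔ x j ++ z j ∈ L := by
    rw [← Language.mem_leftQuotient, ← Language.mem_leftQuotient]
    exact Iff.of_eq (congrArg (z j ∈ ·) hij)
  rw [h, h] at this
  simpa using this

/-! ### Counter words -/

theorem Nat.bits_injective : Function.Injective Nat.bits := fun m n h =>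
  Nat.digits.injective 2 (by rw [Nat.digits_two_eq_bits, Nat.digits_two_eq_bits, h])

namespace BinaryCounter

inductive Letter
  | digit (b : Bool)
  | sep
  deriving DecidableEq, Fintype

def digits (x : List Bool) : List Letter := x.map .digit

@[simp] theorem digits_nil : digits [] = [] := rfl

@[simp] theorem digits_cons (b : Bool) (x : List Bool) : digits (b :: x) = .digit b :: digits x :=
  rfl

@[simp] theorem digits_append (x y : List Bool) : digits (x ++ y) = digits x ++ digits y :=
  List.map_append ..

@[simp] theorem reverse_digits (x : List Bool) : (digits x).reverse = digits x.reverse :=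
  (List.map_reverse ..).symm

@[simp] theorem sep_not_mem_digits (x : List Bool) : Letter.sep ∉ digits x := by simp [digits]

@[simp] theorem count_sep_digits (x : List Bool) : (digits x).count .sep = 0 :=
  List.count_eq_zero.mpr (sep_not_mem_digits x)

@[simp] def firstBlock : List Letter → List Bool
  | [] => []
  | .sep :: _ => []
  | .digit b :: r => b :: firstBlock r

@[simp] theorem firstBlock_digits_append (x : List Bool) (r : List Letter) :
    firstBlock (digits x ++ r) = x ++ firstBlock r := by
  induction x <;> simp [*]

@[simp] theorem firstBlock_digits (x : List Bool) : firstBlock (digits x) = x := by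
  simpa using firstBlock_digits_append x []

@[simp] theorem firstBlock_append_sep (v w : List Letter) :
    firstBlock (v ++ .sep :: w) = firstBlock v := by
  induction v with
  | nil => rfl
  | cons a v ih => cases a <;> simp [ih]

theorem eq_digits_firstBlock_or (r : List Letter) :
    r = digits (firstBlock r) ∨ ∃ r', r = digits (firstBlock r) ++ .sep :: r' := by
  induction r with
  | nil => simp
  | cons a r ih =>
    cases a with
    | sep => simp
    | digit b =>
      rcases ih with h | ⟨r', h⟩
      · exact .inl (by simp [← h])
      · exact .inr ⟨r', by simp [← h]⟩

theorem head?_eq_of_firstBlock_eq_cons {r : List Letter} {b : Bool} {x : List Bool}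
    (h : firstBlock r = b :: x) : r.head? = some (.digit b) := by
  match r, h with
  | .digit _ :: _, h => simp_all

/-- Little-endian addition of a carry bit. -/
@[simp] def addCarry : Bool → List Bool → List Bool
  | c, [] => if c then [true] else []
  | c, a :: l => xor c a :: addCarry (c && a) l

@[simp] theorem addCarry_false (l : List Bool) : addCarry false l = l := by
  induction l <;> simp [*]

theorem addCarry_true_bits (n : ℕ) : addCarry true n.bits = (n + 1).bits := by
  induction n using Nat.strong_induction_on with
  | _ n ih =>
    obtain ⟨m, rfl | rfl⟩ := Nat.even_or_odd' n
    · rcases Nat.eq_zero_or_pos m with rfl | hm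
      · simp [Nat.one_bits]
      · simp [Nat.bit0_bits m hm.ne', Nat.bit1_bits]
    · have hbits : (2 * m + 1 + 1).bits = false :: (m + 1).bits := by
        rw [show 2 * m + 1 + 1 = 2 * (m + 1) by ring, Nat.bit0_bits _ (by omega)]
      simp [Nat.bit1_bits, hbits, ih m (by omega)]

/-- Some separator of `w` joins blocks `X # Y` with `Y ≠ addCarry c X.reverse`, where `c` is the
parity of `j` plus the number of separators before it (`firstBlock u.reverse` is `X` reversed). -/
def HasBadPairFrom (j : ℕ) (w : List Letter) : Prop :=
  ∃ u r, w = u ++ .sep :: r ∧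
    firstBlock r ≠ addCarry (j + u.count .sep).bodd (firstBlock u.reverse)

theorem not_hasBadPairFrom_digits (j : ℕ) (x : List Bool) : ¬HasBadPairFrom j (digits x) := by
  rintro ⟨u, r, h, -⟩
  exact sep_not_mem_digits x (h ▸ by simp)

theorem hasBadPairFrom_digits_append_sep {j : ℕ} {x : List Bool} {r : List Letter} :
    HasBadPairFrom j (digits x ++ .sep :: r) ↔
      firstBlock r ≠ addCarry j.bodd x.reverse ∨ HasBadPairFrom (j + 1) r := by
  constructor
  · rintro ⟨u, r', h, hne⟩
    rcases List.append_eq_append_iff.mp h with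
      ⟨_ | ⟨a, v⟩, rfl, h'⟩ | ⟨_ | ⟨a, v⟩, hx, h'⟩
    · obtain rfl : r = r' := by simpa using h'
      exact .inl (by simpa using hne)
    · obtain ⟨rfl, rfl⟩ : .sep = a ∧ r = v ++ .sep :: r' := by simpa using h'
      refine .inr ⟨v, r', rfl, ?_⟩
      simpa [List.count_cons, add_assoc, add_comm 1] using hne
    · obtain rfl : digits x = u := by simpa using hx
      obtain rfl : r' = r := by simpa using h'
      exact .inl (by simpa using hne)
    · obtain ⟨rfl, -⟩ : .sep = a ∧ _ := by simpa using h'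
      exact absurd (hx ▸ by simp : Letter.sep ∈ digits x) (sep_not_mem_digits x)
  · rintro (hne | ⟨u, r', rfl, hne⟩)
    · exact ⟨digits x, r, rfl, by simpa using hne⟩
    · refine ⟨digits x ++ .sep :: u, r', by simp, ?_⟩
      simpa [List.count_cons, add_assoc, add_comm 1] using hne

def counterBlock : ℕ → List Bool
  | 0 => []
  | j + 1 => addCarry j.bodd (counterBlock j).reverse

theorem counterBlock_succ (j : ℕ) :
    counterBlock (j + 1) = addCarry j.bodd (counterBlock j).reverse :=
  rfl

theorem counterBlock_two_mul (i : ℕ) :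
    counterBlock (2 * i) = i.bits ∧ counterBlock (2 * i + 1) = i.bits.reverse := by
  induction i with
  | zero => simp [counterBlock]
  | succ i ih =>
    have h2 : counterBlock (2 * (i + 1)) = (i + 1).bits := by
      rw [show 2 * (i + 1) = 2 * i + 1 + 1 by ring, counterBlock, ih.2]
      simp [addCarry_true_bits]
    refine ⟨h2, ?_⟩
    rw [counterBlock, h2]
    simp

theorem length_counterBlock_le (j : ℕ) : (counterBlock j).length ≤ j.size := by
  obtain ⟨i, rfl | rfl⟩ := Nat.even_or_odd' j <;>
    simp only [(counterBlock_two_mul i).1, (counterBlock_two_mul i).2, List.length_reverse,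
      Nat.size_eq_bits_len] <;>
    exact Nat.size_le_size (by omega)

def counterWord (j : ℕ) : ℕ → List Letter
  | 0 => digits (counterBlock j)
  | n + 1 => digits (counterBlock j) ++ .sep :: counterWord (j + 1) n

theorem firstBlock_counterWord_append_sep (j n : ℕ) (v : List Letter) :
    firstBlock (counterWord j n ++ .sep :: v) = counterBlock j := by
  cases n <;> simp [counterWord]

theorem hasBadPairFrom_counterWord_append_sep_digits (j n : ℕ) (y : List Bool) :
    HasBadPairFrom j (counterWord j n ++ .sep :: digits y) ↔ y ≠ counterBlock (j + n + 1) := by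
  induction n generalizing j with
  | zero =>
    simp [counterWord, hasBadPairFrom_digits_append_sep, not_hasBadPairFrom_digits, counterBlock]
  | succ n ih =>
    rw [counterWord, List.append_assoc, List.cons_append, hasBadPairFrom_digits_append_sep,
      firstBlock_counterWord_append_sep, ih, counterBlock_succ,
      show j + 1 + n = j + (n + 1) by omega]
    simp

/-! ### The grammar of the other words -/

/-- `scan c` and `blockStart c` follow a prefix whose number of separators has parity `c` (at the
start of a block for `blockStart`); `chain i o` derives `X # Z` where `Z` is the low part of
`addCarry i X.reverse` and `o` the carry out of it. -/
inductive Nonterminal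
  | start
  | any
  | notHead (e : Bool)
  | notFirst (o : Bool)
  | scan (c : Bool)
  | blockStart (c : Bool)
  | chain (i o : Bool)
  deriving DecidableEq

inductive Production
  | startError
  | startScan
  | anyNil
  | anyCons (a : Letter)
  | notHeadNil (e : Bool)
  | notHeadSep (e : Bool)
  | notHeadDigit (e : Bool)
  | nonemptyBlock (b : Bool)
  | notOneNil
  | notOneSep
  | notOneZero
  | notOneLong (b : Bool)
  | blockScan (c : Bool)
  | scanDigit (c b : Bool)
  | scanSep (c : Bool)
  | mismatch (c s a : Bool)
  | overflow (c o : Bool)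
  | chainSep (c : Bool)
  | chainStep (i s a : Bool)
  deriving Fintype

@[simp] def Production.rule : Production → ContextFreeRule Letter Nonterminal
  | startError => ⟨.start, [.nonterminal (.notFirst false)]⟩
  | startScan => ⟨.start, [.nonterminal (.blockStart true)]⟩
  | anyNil => ⟨.any, []⟩
  | anyCons a => ⟨.any, [.terminal a, .nonterminal .any]⟩
  | notHeadNil e => ⟨.notHead e, []⟩
  | notHeadSep e => ⟨.notHead e, [.terminal .sep, .nonterminal .any]⟩
  | notHeadDigit e => ⟨.notHead e, [.terminal (.digit !e), .nonterminal .any]⟩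
  | nonemptyBlock b => ⟨.notFirst false, [.terminal (.digit b), .nonterminal .any]⟩
  | notOneNil => ⟨.notFirst true, []⟩
  | notOneSep => ⟨.notFirst true, [.terminal .sep, .nonterminal .any]⟩
  | notOneZero => ⟨.notFirst true, [.terminal (.digit false), .nonterminal .any]⟩
  | notOneLong b =>
    ⟨.notFirst true, [.terminal (.digit true), .terminal (.digit b), .nonterminal .any]⟩
  | blockScan c => ⟨.blockStart c, [.nonterminal (.scan c)]⟩
  | scanDigit c b => ⟨.scan c, [.terminal (.digit b), .nonterminal (.scan c)]⟩
  | scanSep c => ⟨.scan c, [.terminal .sep, .nonterminal (.blockStart !c)]⟩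
  | mismatch c s a =>
    ⟨.scan c,
      [.terminal (.digit a), .nonterminal (.chain c s), .nonterminal (.notHead (xor s a))]⟩
  | overflow c o => ⟨.blockStart c, [.nonterminal (.chain c o), .nonterminal (.notFirst o)]⟩
  | chainSep c => ⟨.chain c c, [.terminal .sep]⟩
  | chainStep i s a =>
    ⟨.chain i (s && a),
      [.terminal (.digit a), .nonterminal (.chain i s), .terminal (.digit (xor s a))]⟩

def grammar : ContextFreeGrammar Letter where
  NT := Nonterminal
  initial := .start
  rules := Finset.univ.image Production.rule

theorem Production.rule_mem (p : Production) : p.rule ∈ grammar.rules :=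
  Finset.mem_image_of_mem _ (Finset.mem_univ p)

theorem Production.exists_rule_eq_of_mem {r : ContextFreeRule Letter Nonterminal}
    (hr : r ∈ grammar.rules) : ∃ p : Production, p.rule = r := by
  obtain ⟨p, -, h⟩ := Finset.mem_image.mp (hr : r ∈ Finset.univ.image Production.rule)
  exact ⟨p, h⟩

/-- The separator in front compares the first block with the empty block, forcing it to be
empty. -/
def badWords : Language Letter := {w | HasBadPairFrom 0 (.sep :: w)}

def spec : Nonterminal → Language Letter
  | .start => badWords
  | .any => ⊤
  | .notHead e => {w | w.head? ≠ some (.digit e)}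
  | .notFirst o => {w | firstBlock w ≠ addCarry o []}
  | .scan c => {w | ∀ u : List Letter, (u.count .sep).bodd = c → HasBadPairFrom 0 (u ++ w)}
  | .blockStart c => {w | ∀ u : List Letter, firstBlock u.reverse = [] →
      (u.count .sep).bodd = c → HasBadPairFrom 0 (u ++ w)}
  | .chain i o => {w | ∃ x z, w = digits x ++ .sep :: digits z ∧
      ∀ m, addCarry i (x.reverse ++ m) = z ++ addCarry o m}

theorem hasBadPairFrom_of_mismatch {u r : List Letter} {x z : List Bool} {c s a : Bool}
    (hu : (u.count .sep).bodd = c) (hxz : ∀ m, addCarry c (x.reverse ++ m) = z ++ addCarry s m)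
    (hr : r.head? ≠ some (.digit (xor s a))) :
    HasBadPairFrom 0 (u ++ .digit a :: (digits x ++ .sep :: digits z ++ r)) := by
  refine ⟨u ++ .digit a :: digits x, digits z ++ r, by simp, fun h => hr ?_⟩
  simp [hu, hxz] at h
  exact head?_eq_of_firstBlock_eq_cons h

theorem hasBadPairFrom_of_overflow {u r : List Letter} {x z : List Bool} {c o : Bool}
    (hu : firstBlock u.reverse = []) (hc : (u.count .sep).bodd = c)
    (hxz : ∀ m, addCarry c (x.reverse ++ m) = z ++ addCarry o m)
    (hr : firstBlock r ≠ addCarry o []) :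
    HasBadPairFrom 0 (u ++ (digits x ++ .sep :: digits z ++ r)) := by
  refine ⟨u ++ digits x, digits z ++ r, by simp, fun h => hr ?_⟩
  simpa [hu, hc, by simpa using hxz []] using h

theorem spec_closed : ∀ r ∈ grammar.rules, formLanguage spec r.output ≤ spec r.input := by
  intro r hr w hw
  obtain ⟨p, rfl⟩ := Production.exists_rule_eq_of_mem hr
  replace hw : w ∈ formLanguage spec p.rule.output := hw
  show w ∈ spec p.rule.input
  cases p <;> simp only [Production.rule, mem_formLanguage_terminal_cons,
    mem_formLanguage_nonterminal_cons, mem_formLanguage_nil, exists_eq_left, List.append_nil,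
    exists_eq_right'] at hw ⊢
  case startError => exact (hasBadPairFrom_digits_append_sep (x := [])).mpr (.inl hw)
  case startScan => exact hw [.sep] rfl rfl
  case anyNil | anyCons => trivial
  case notHeadNil | notOneNil => exact hw ▸ nofun
  case notHeadSep | nonemptyBlock | notOneSep | notOneZero =>
    obtain ⟨_, -, rfl⟩ := hw
    nofun
  case notHeadDigit e =>
    obtain ⟨_, -, rfl⟩ := hw
    cases e <;> nofun
  case notOneLong =>
    obtain ⟨_, ⟨_, -, rfl⟩, rfl⟩ := hw
    nofun
  case blockScan => exact fun u _ hc => hw u hc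
  case scanDigit c b =>
    obtain ⟨w, hw, rfl⟩ := hw
    exact fun u hu => List.append_cons u _ w ▸ hw _ (by simpa using hu)
  case scanSep c =>
    obtain ⟨w, hw, rfl⟩ := hw
    exact fun u hu => List.append_cons u _ w ▸ hw _ (by simp) (by simp [hu])
  case mismatch c s a =>
    obtain ⟨_, ⟨_, ⟨x, z, rfl, hxz⟩, r, hr, rfl⟩, rfl⟩ := hw
    intro u hu
    simpa using hasBadPairFrom_of_mismatch hu hxz hr
  case overflow c o =>
    obtain ⟨_, ⟨x, z, rfl, hxz⟩, r, hr, rfl⟩ := hw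
    intro u hu hc
    simpa using hasBadPairFrom_of_overflow hu hc hxz hr
  case chainSep => exact ⟨[], [], hw, fun _ => rfl⟩
  case chainStep i s a =>
    obtain ⟨_, ⟨_, ⟨x, z, rfl, hxz⟩, rfl⟩, rfl⟩ := hw
    exact ⟨a :: x, z ++ [xor s a], by simp, fun m => by simp [hxz]⟩

/-! ### Cheap derivations -/

theorem Production.derivesN_of_regular (p : Production) (hp : IsRegularRule p.rule)
    {w : List (Symbol Letter Nonterminal)} {k : ℕ} (h : DerivesN grammar p.rule.output w k) :
    DerivesN grammar [.nonterminal p.rule.input] w k :=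
  DerivesN.head_regular p.rule_mem hp h

theorem Production.derivesN_of_nonregular (p : Production) {A : Nonterminal}
    (hA : .nonterminal A ∈ p.rule.output.dropLast) {w : List (Symbol Letter Nonterminal)}
    {k : ℕ} (h : DerivesN grammar p.rule.output w k) :
    DerivesN grammar [.nonterminal p.rule.input] w (k + 1) :=
  DerivesN.head_nonregular p.rule_mem (not_isRegularRule_of_mem_dropLast hA) h

theorem derivesN_any (w : List Letter) :
    DerivesN grammar [.nonterminal .any] (w.map .terminal) 0 := by
  induction w with
  | nil => exact Production.anyNil.derivesN_of_regular (.inl ⟨[], rfl⟩) (.refl _)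
  | cons a w ih =>
    exact (Production.anyCons a).derivesN_of_regular (.inr ⟨[a], _, rfl⟩)
      (ih.append_left [.terminal a])

theorem derivesN_notHead {e : Bool} {r : List Letter} (hr : r.head? ≠ some (.digit e)) :
    DerivesN grammar [.nonterminal (.notHead e)] (r.map .terminal) 0 := by
  match r, hr with
  | [], _ => exact (Production.notHeadNil e).derivesN_of_regular (.inl ⟨[], rfl⟩) (.refl _)
  | .sep :: r, _ =>
    exact (Production.notHeadSep e).derivesN_of_regular (.inr ⟨[.sep], _, rfl⟩)
      ((derivesN_any r).append_left [.terminal .sep])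
  | .digit b :: r, hr =>
    obtain rfl : b = !e := by simpa [Bool.eq_not_iff] using hr
    exact (Production.notHeadDigit e).derivesN_of_regular (.inr ⟨[.digit !e], _, rfl⟩)
      ((derivesN_any r).append_left [.terminal (.digit !e)])

theorem derivesN_notFirst {o : Bool} {r : List Letter} (hr : firstBlock r ≠ addCarry o []) :
    DerivesN grammar [.nonterminal (.notFirst o)] (r.map .terminal) 0 := by
  match o, r, hr with
  | false, [], hr | false, .sep :: _, hr | true, [.digit true], hr
  | true, .digit true :: .sep :: _, hr => simp at hr
  | false, .digit b :: r, _ =>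
    exact (Production.nonemptyBlock b).derivesN_of_regular (.inr ⟨[.digit b], _, rfl⟩)
      ((derivesN_any r).append_left [.terminal (.digit b)])
  | true, [], _ => exact Production.notOneNil.derivesN_of_regular (.inl ⟨[], rfl⟩) (.refl _)
  | true, .sep :: r, _ =>
    exact Production.notOneSep.derivesN_of_regular (.inr ⟨[.sep], _, rfl⟩)
      ((derivesN_any r).append_left [.terminal .sep])
  | true, .digit false :: r, _ =>
    exact Production.notOneZero.derivesN_of_regular (.inr ⟨[.digit false], _, rfl⟩)
      ((derivesN_any r).append_left [.terminal (.digit false)])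
  | true, .digit true :: .digit b :: r, _ =>
    exact (Production.notOneLong b).derivesN_of_regular
      (.inr ⟨[.digit true, .digit b], _, rfl⟩)
      ((derivesN_any r).append_left [.terminal (.digit true), .terminal (.digit b)])

theorem derivesN_scan_digits (c : Bool) (x : List Bool) :
    DerivesN grammar [.nonterminal (.scan c)]
      ((digits x).map .terminal ++ [.nonterminal (.scan c)]) 0 := by
  induction x with
  | nil => exact .refl _
  | cons b x ih =>
    exact (Production.scanDigit c b).derivesN_of_regular (.inr ⟨[.digit b], _, rfl⟩)
      (ih.append_left [.terminal (.digit b)])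

theorem derivesN_blockStart_block (c : Bool) (x : List Bool) :
    DerivesN grammar [.nonterminal (.blockStart c)]
      ((digits x ++ [Letter.sep]).map .terminal ++ [.nonterminal (.blockStart !c)]) 0 := by
  have hsep : DerivesN grammar [.nonterminal (.scan c)]
      [.terminal .sep, .nonterminal (.blockStart !c)] 0 :=
    (Production.scanSep c).derivesN_of_regular (.inr ⟨[.sep], _, rfl⟩) (.refl _)
  rw [List.map_append, List.append_assoc]
  exact (Production.blockScan c).derivesN_of_regular (.inr ⟨[], _, rfl⟩)
    ((derivesN_scan_digits c x).trans (hsep.append_left _))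

/-- The chain `x # z` is extended by digits of `l` as long as `r` agrees with the carry
propagation; at the first disagreement, or when `l` runs out, `mismatch` or `overflow` ends it. -/
theorem exists_derivesN_of_chain {c : Bool} :
    ∀ (l x z : List Bool) (s : Bool) (r : List Letter),
      (∀ m, addCarry c (x.reverse ++ m) = z ++ addCarry s m) →
      DerivesN grammar [.nonterminal (.chain c s)]
        ((digits x ++ .sep :: digits z).map .terminal) x.length →
      firstBlock r ≠ addCarry s l →
      ∃ k ≤ l.length + x.length + 1, DerivesN grammar [.nonterminal (.blockStart c)]
        ((digits (l.reverse ++ x) ++ .sep :: (digits z ++ r)).map .terminal) k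
  | [], x, z, s, r, _, hchain, hr => by
    refine ⟨x.length + 1, by simp, ?_⟩
    have := (Production.overflow c s).derivesN_of_nonregular (A := .chain c s) (by simp)
      (hchain.append (derivesN_notFirst hr))
    simpa using this
  | a :: l, x, z, s, r, hxz, hchain, hr => by
    by_cases hhead : r.head? = some (.digit (xor s a))
    · obtain ⟨r, rfl⟩ : ∃ r', r = .digit (xor s a) :: r' := by
        match r, hhead with
        | _ :: r', h => exact ⟨r', by simpa using h⟩
      have hchain' := (Production.chainStep c s a).derivesN_of_nonregular (A := .chain c s)
        (by simp)
        ((hchain.append_left [.terminal (.digit a)]).append_right [.terminal (.digit (xor s a))])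
      obtain ⟨k, hk, hd⟩ := exists_derivesN_of_chain (c := c) l (a :: x) (z ++ [xor s a])
        (s && a) r (fun m => by simp [hxz]) (by simpa using hchain') (by simpa using hr)
      exact ⟨k, by simp at hk ⊢; omega, by simpa using hd⟩
    · refine ⟨x.length + 1, by simp, ?_⟩
      have hmis := (Production.mismatch c s a).derivesN_of_nonregular (A := .chain c s)
        (by simp)
        ((DerivesN.refl (g := grammar) [.terminal (.digit a)]).append
          (hchain.append (derivesN_notHead hhead)))
      have := (Production.blockScan c).derivesN_of_regular (.inr ⟨[], _, rfl⟩)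
        ((derivesN_scan_digits c l.reverse).trans (hmis.append_left _))
      simpa using this

theorem exists_derivesN_of_firstBlock_ne {c : Bool} {x : List Bool} {r : List Letter}
    (hr : firstBlock r ≠ addCarry c x.reverse) :
    ∃ k ≤ x.length + 1, DerivesN grammar [.nonterminal (.blockStart c)]
      ((digits x ++ .sep :: r).map .terminal) k := by
  have hsep : DerivesN grammar [.nonterminal (.chain c c)]
      ((digits [] ++ .sep :: digits []).map .terminal) 0 :=
    (Production.chainSep c).derivesN_of_regular (.inl ⟨[.sep], rfl⟩) (.refl _)
  simpa using exists_derivesN_of_chain x.reverse [] [] c r (fun _ => rfl) hsep hr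

/-- The first bad pair of a word follows a counter block, whose length is logarithmic. -/
theorem not_hasBadPairFrom_or_exists_derivesN (j : ℕ) (r : List Letter)
    (hr : firstBlock r = counterBlock j) :
    ¬HasBadPairFrom j r ∨ ∃ k ≤ (j + r.length).size + 1,
      DerivesN grammar [.nonterminal (.blockStart j.bodd)] (r.map .terminal) k := by
  rcases eq_digits_firstBlock_or r with hr' | ⟨r', hr'⟩
  · exact .inl (hr' ▸ not_hasBadPairFrom_digits j _)
  rw [hr] at hr'
  subst hr'
  have hsize : (counterBlock j).length + 1 ≤
      (j + (digits (counterBlock j) ++ .sep :: r').length).size + 1 := by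
    have := length_counterBlock_le j
    have := Nat.size_le_size (Nat.le_add_right j (digits (counterBlock j) ++ .sep :: r').length)
    omega
  by_cases hnext : firstBlock r' = counterBlock (j + 1)
  · rcases not_hasBadPairFrom_or_exists_derivesN (j + 1) r' hnext with hgood | ⟨k, hk, hd⟩
    · refine .inl fun hbad => ?_
      rcases hasBadPairFrom_digits_append_sep.mp hbad with hne | hbad
      · exact hne hnext
      · exact hgood hbad
    · have hlen : j + 1 + r'.length ≤ j + (digits (counterBlock j) ++ .sep :: r').length := by
        simp
        omega
      refine .inr ⟨k, hk.trans (Nat.add_le_add_right (Nat.size_le_size hlen) 1), ?_⟩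
      rw [Nat.bodd_succ] at hd
      simpa using (derivesN_blockStart_block j.bodd (counterBlock j)).trans (hd.append_left _)
  · obtain ⟨k, hk, hd⟩ := exists_derivesN_of_firstBlock_ne hnext
    exact .inr ⟨k, hk.trans hsize, hd⟩
termination_by r.length
decreasing_by rw [hr']; simp; omega

theorem exists_derivesN_of_mem_badWords {w : List Letter} (hw : w ∈ badWords) :
    ∃ k ≤ (w.length + 1).size + 1,
      DerivesN grammar [.nonterminal .start] (w.map .terminal) k := by
  by_cases h0 : firstBlock w = []
  · rcases not_hasBadPairFrom_or_exists_derivesN 1 w h0 with hgood | ⟨k, hk, hd⟩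
    · rcases (hasBadPairFrom_digits_append_sep (x := [])).mp hw with hne | hbad
      · exact absurd h0 hne
      · exact absurd hbad hgood
    · exact ⟨k, by rwa [Nat.add_comm w.length],
        Production.startScan.derivesN_of_regular (.inr ⟨[], _, rfl⟩) hd⟩
  · exact ⟨0, by omega,
      Production.startError.derivesN_of_regular (.inr ⟨[], _, rfl⟩) (derivesN_notFirst h0)⟩

theorem language_grammar : grammar.language = badWords := by
  ext w
  rw [ContextFreeGrammar.mem_language_iff]
  refine ⟨mem_of_derives spec_closed, fun hw => ?_⟩
  obtain ⟨k, -, hd⟩ := exists_derivesN_of_mem_badWords hw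
  exact hd.derives

theorem dnregFun_grammar_le (n : ℕ) : dnregFun grammar n ≤ (n + 1).size + 1 := by
  refine dnregFun_le_of_forall fun w hw => dnregWord_le_of_derivesN fun hmem => ?_
  rw [language_grammar] at hmem
  exact hw ▸ exists_derivesN_of_mem_badWords hmem

theorem inO_dnregFun_grammar_log : InO (dnregFun grammar) (fun n => Nat.log 2 n) := by
  refine ⟨3, fun n => show dnregFun grammar n ≤ 3 * Nat.log 2 n + 3 from ?_⟩
  have hsize : (n + 1).size ≤ Nat.log 2 n + 2 := by
    refine Nat.size_le.mpr ?_
    have := Nat.lt_pow_succ_log_self one_lt_two n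
    rw [pow_succ] at this ⊢
    omega
  have := dnregFun_grammar_le n
  omega

theorem append_mem_badWords_iff (i j : ℕ) :
    counterWord 1 (2 * i) ++ .sep :: digits (j + 1).bits ∈ badWords ↔ i ≠ j := by
  have := hasBadPairFrom_counterWord_append_sep_digits 0 (2 * i + 1) (j + 1).bits
  rw [show 0 + (2 * i + 1) + 1 = 2 * (i + 1) by ring, (counterBlock_two_mul _).1,
    Ne, Nat.bits_injective.eq_iff] at this
  change HasBadPairFrom 0 (.sep :: _) ↔ _
  simpa [counterWord, counterBlock, eq_comm] using this

theorem not_isRegular_language_grammar : ¬grammar.language.IsRegular := by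
  rw [language_grammar]
  exact not_isRegular_of_forall_append_mem_iff _ _ append_mem_badWords_iff

end BinaryCounter

/-- Both `DNREG(√n)` and `DNREG(log n)` contain non-regular languages. -/
theorem DNREG_sqrt_and_log_contain_nonregular :
    (∃ (T : Type) (_ : Fintype T) (g : ContextFreeGrammar T),
      ¬ g.language.IsRegular ∧ InO (dnregFun g) Nat.sqrt) ∧
    (∃ (T : Type) (_ : Fintype T) (g : ContextFreeGrammar T),
      ¬ g.language.IsRegular ∧ InO (dnregFun g) (fun n => Nat.log 2 n)) := by
  have hreg := BinaryCounter.not_isRegular_language_grammar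
  have hlog := BinaryCounter.inO_dnregFun_grammar_log
  exact ⟨⟨_, inferInstance, _, hreg, hlog.trans inO_log_sqrt⟩,
    ⟨_, inferInstance, _, hreg, hlog⟩⟩
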